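/- Let V be a K-vector space endowed with two inner products ⟨·,·⟩₀ and ⟨·,·⟩₁ such that rad(⟨·,·⟩₀) ⊆ rad(⟨·,·⟩₁), and endow V with the ⟨·,·⟩₀-topology. Then the following are equivalent: (i) ⟨·,·⟩₁ is partially continuous; (ii) there exists a continuous linear map T : V → V vanishing on rad(⟨·,·⟩₀) such that ⟨x,y⟩₁ = ⟨T(x),y⟩₀ for all x,y ∈ V. -/
import Mathlib


/-- The `⟨·,·⟩`-topology on `V` determined by a (possibly degenerate) bilinear form `B`:
the initial topology determined by the maps `x ↦ B v x` into `K` with the discrete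
topology.  (This agrees with the initial topology induced by the projection
`V → V/rad(B)` where the quotient carries the weak topology of the induced
nondegenerate form.) -/
def weakTopology {K V : Type*} [Field K] [AddCommGroup V] [Module K V]
    (B : V →ₗ[K] V →ₗ[K] K) : TopologicalSpace V :=
  ⨅ v : V, TopologicalSpace.induced (fun x => B v x) (⊥ : TopologicalSpace K)

/-- A linear functional continuous for the `B`-weak topology is of the form `B w`. -/
lemma exists_rep_of_continuous {K V : Type*} [Field K] [AddCommGroup V] [Module K V]
    (B : V →ₗ[K] V →ₗ[K] K) (f : V →ₗ[K] K)
    (hf : @Continuous V K (weakTopology B) ⊥ f) : ∃ w : V, B w = f := by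
  letI : TopologicalSpace K := ⊥
  haveI : DiscreteTopology K := ⟨rfl⟩
  letI : TopologicalSpace V := weakTopology B
  have hopen : IsOpen (f ⁻¹' {0}) :=
    hf.isOpen_preimage _ (isOpen_discrete _)
  have hmem : f ⁻¹' {0} ∈ @nhds V (⨅ v : V, TopologicalSpace.induced (fun x => B v x)
      (⊥ : TopologicalSpace K)) 0 := hopen.mem_nhds (by simp)
  rw [nhds_iInf] at hmem
  simp only [nhds_induced, nhds_discrete, map_zero] at hmem
  rw [Filter.mem_iInf] at hmem
  obtain ⟨I, hIfin, W, hW, hWeq⟩ := hmem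
  haveI : Finite I := hIfin
  have hker : ⨅ i : I, LinearMap.ker (B i) ≤ LinearMap.ker f := by
    intro x hx
    simp only [Submodule.mem_iInf, LinearMap.mem_ker] at hx
    have hxmem : x ∈ f ⁻¹' {0} := by
      rw [hWeq]
      refine Set.mem_iInter.2 fun i => ?_
      obtain ⟨t, ht, hts⟩ := (Filter.mem_comap).1 (hW i)
      exact hts (by simp [hx i, Filter.mem_pure.1 ht])
    simpa using hxmem
  have hspan : f ∈ Submodule.span K (Set.range fun i : I => B i) :=
    mem_span_of_iInf_ker_le_ker hker
  have hle : Submodule.span K (Set.range fun i : I => B i) ≤ LinearMap.range B := by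
    rw [Submodule.span_le]
    rintro - ⟨i, rfl⟩
    exact ⟨i, rfl⟩
  exact hle hspan

/-- Let `B₀`, `B₁` be inner products on `V` with `rad B₀ ⊆ rad B₁`, and endow `V` with
the `B₀`-topology.  Then `B₁` is partially continuous iff there is a continuous linear
map `T : V → V` vanishing on `rad B₀` such that `B₁ x y = B₀ (T x) y` for all `x, y`. -/
theorem partiallyContinuous_iff_exists_continuous_linearMap_degenerate
    {K V : Type*} [Field K] [AddCommGroup V] [Module K V]
    (B0 B1 : V →ₗ[K] V →ₗ[K] K)
    (h0sym : ∀ x y, B0 x y = B0 y x)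
    (h1sym : ∀ x y, B1 x y = B1 y x)
    (hrad : LinearMap.ker B0 ≤ LinearMap.ker B1) :
    (∀ x : V,
        @Continuous V K (weakTopology B0) ⊥ (fun y => B1 x y) ∧
        @Continuous V K (weakTopology B0) ⊥ (fun y => B1 y x)) ↔
      (∃ T : V →ₗ[K] V,
        @Continuous V V (weakTopology B0) (weakTopology B0) T ∧
        (∀ x ∈ LinearMap.ker B0, T x = 0) ∧
        ∀ x y, B1 x y = B0 (T x) y) := by
  constructor
  · intro h
    obtain ⟨W, hW⟩ := Submodule.exists_isCompl (LinearMap.ker B0)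
    set B0' : W →ₗ[K] (V →ₗ[K] K) := B0 ∘ₗ W.subtype with hB0'
    have hinj : Function.Injective B0' := by
      rw [← LinearMap.ker_eq_bot, Submodule.eq_bot_iff]
      rintro ⟨w, hw⟩ hker
      have : w ∈ LinearMap.ker B0 := hker
      have := hW.disjoint.le_bot ⟨this, hw⟩
      simpa [Subtype.ext_iff] using this
    have hrange : ∀ x : V, B1 x ∈ LinearMap.range B0' := by
      intro x
      obtain ⟨w, hw⟩ := exists_rep_of_continuous B0 (B1 x) (h x).1
      have hw' : w ∈ LinearMap.ker B0 ⊔ W := by rw [hW.sup_eq_top]; trivial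
      obtain ⟨r, hr, z, hz, rfl⟩ := Submodule.mem_sup.1 hw'
      refine ⟨⟨z, hz⟩, ?_⟩
      have : B0 (r + z) = B0 r + B0 z := map_add _ _ _
      rw [LinearMap.mem_ker.1 hr, zero_add] at this
      simp only [hB0', LinearMap.comp_apply, Submodule.subtype_apply]
      rw [← this, hw]
    let e : W ≃ₗ[K] LinearMap.range B0' := LinearEquiv.ofInjective B0' hinj
    let T : V →ₗ[K] V := W.subtype ∘ₗ e.symm.toLinearMap ∘ₗ
      LinearMap.codRestrict (LinearMap.range B0') B1 hrange
    have he : ∀ w : W, ((e w : LinearMap.range B0') : V →ₗ[K] K) = B0' w := fun w => rfl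
    have hTB : ∀ x : V, B0 (T x) = B1 x := by
      intro x
      have h1 := congrArg (Subtype.val) (e.apply_symm_apply ⟨B1 x, hrange x⟩)
      rw [he] at h1
      exact h1
    refine ⟨T, ?_, ?_, fun x y => (congrFun (congrArg _ (hTB x)) y).symm⟩
    · rw [show weakTopology B0 = ⨅ v : V, TopologicalSpace.induced (fun x => B0 v x)
          (⊥ : TopologicalSpace K) from rfl]
      rw [continuous_iInf_rng]
      intro v
      rw [continuous_induced_rng]
      have : ((fun x => B0 v x) ∘ ⇑T) = fun y => B1 y v := by
        funext y
        simp only [Function.comp_apply]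
        rw [h0sym v (T y), hTB y, h1sym]
      rw [this]
      exact (h v).2
    · intro x hx
      have hx1 : B1 x = 0 := hrad hx
      have : T x = W.subtype (e.symm ⟨B1 x, hrange x⟩) := rfl
      rw [this]
      have h0 : (⟨B1 x, hrange x⟩ : LinearMap.range B0') = 0 := by
        ext; simp [hx1]
      rw [h0, map_zero, map_zero]
  · rintro ⟨T, hTc, hT0, hTB⟩ x
    have key : @Continuous V K (weakTopology B0) ⊥ (fun y => B0 (T x) y) := by
      rw [show weakTopology B0 = ⨅ v : V, TopologicalSpace.induced (fun x => B0 v x)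
          (⊥ : TopologicalSpace K) from rfl]
      exact continuous_iInf_dom (continuous_induced_dom (t := (⊥ : TopologicalSpace K))
        (f := fun y => B0 (T x) y))
    constructor
    · have : (fun y => B1 x y) = fun y => B0 (T x) y := funext fun y => hTB x y
      exact this ▸ key
    · have : (fun y => B1 y x) = fun y => B0 (T x) y := funext fun y => by
        rw [h1sym y x, hTB x y]
      exact this ▸ key
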